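/- Let X be a metric space such that for all y, z ∈ X and every ε > 0 there exists a continuous path from y to z of length less than dist(y, z) + ε. Let p ∈ X, let G be a group, and let φ : π₁(X, p) → G be a group homomorphism. Let L > 0 and let γ : [0, L] → X be a continuous loop with γ(0) = γ(L) = p, parametrized by arclength (for all 0 ≤ s ≤ t ≤ L, the length of γ restricted to [s, t] equals t − s), whose path-homotopy class has nontrivial image under φ. Suppose γ has minimal length among all such loops: every rectifiable loop based at p whose class has nontrivial image under φ has length at least L. Then dist(p, γ(r)) = r for every r ∈ [0, L/2]. -/

import Mathlib

/-!
If `dist p (γ r) < r` for some `r ≤ L/2`, pick a path `τ` from `p` to `γ r` of length `< r`.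
It splits `γ` into the loops `γ|[0,r] · τ⁻¹` and `τ · γ|[r,L]`, both shorter than `L`, hence
both with trivial image under `φ` by minimality; but their product is homotopic to `γ`,
whose image is nontrivial.
-/

open CategoryTheory

attribute [local instance] Path.Homotopic.setoid

/-- The length of a path in a metric space: the total variation of the map on `[0,1]`. -/
noncomputable def pathLength {X : Type*} [MetricSpace X] {y z : X} (σ : Path y z) : ENNReal :=
  eVariationOn σ.extend (Set.Icc 0 1)

/-- The element of the fundamental group `π₁(X, x)` determined by a loop based at `x`. -/
noncomputable def loopClass {X : Type*} [TopologicalSpace X] {x : X} (γ : Path x x) :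
    FundamentalGroup X x :=
  FundamentalGroup.fromPath (⟦γ⟧ : Path.Homotopic.Quotient x x)

/-- The `φ`-relative systole of `X` at `x`: the infimum of lengths of rectifiable loops
based at `x` whose path-homotopy class has nontrivial image under `φ`. -/
noncomputable def relSystole {X : Type*} [MetricSpace X] (x : X) {G : Type*} [Group G]
    (φ : FundamentalGroup X x →* G) : ENNReal :=
  ⨅ (γ : Path x x) (_ : pathLength γ ≠ ⊤ ∧ φ (loopClass γ) ≠ 1), pathLength γ

open Set

theorem eVariationOn_comp_affine_Icc {E : Type*} [PseudoEMetricSpace E] (f : ℝ → E) {c : ℝ}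
    (hc : 0 ≤ c) (d : ℝ) {a b : ℝ} (hab : a ≤ b) :
    eVariationOn (f ∘ fun t ↦ c * t + d) (Icc a b) =
      eVariationOn f (Icc (c * a + d) (c * b + d)) := by
  obtain rfl | hc := hc.eq_or_lt
  · simp only [zero_mul, zero_add, Icc_self]
    rw [eVariationOn.subsingleton _ subsingleton_singleton]
    exact eVariationOn.constant_on (by simp [(nonempty_Icc.2 hab).image_const])
  · rw [eVariationOn.comp_eq_of_monotoneOn _ _ fun u _ v _ huv ↦ by gcongr,
      image_affine_Icc' hc]

namespace Path

variable {Y : Type*} [TopologicalSpace Y] {a b : Y}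

def initialSubpath (γ : Path a b) (t : unitInterval) : Path a (γ t) :=
  (γ.subpath 0 t).cast γ.source.symm rfl

def finalSubpath (γ : Path a b) (t : unitInterval) : Path (γ t) b :=
  (γ.subpath t 1).cast rfl γ.target.symm

theorem Homotopic.initialSubpath_trans_finalSubpath (γ : Path a b) (t : unitInterval) :
    ((γ.initialSubpath t).trans (γ.finalSubpath t)).Homotopic γ := by
  -- `Path.cast` keeps the underlying map, so a homotopy of the uncast paths serves as is.
  have h : ((γ.subpath 0 t).trans (γ.subpath t 1)).Homotopic (γ.subpath 0 1) :=
    ⟨Homotopy.subpathTransSubpath γ 0 t 1⟩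
  rw [subpath_zero_one] at h
  exact h

end Path

section FundamentalGroup

variable {Y : Type*} [TopologicalSpace Y] {x m : Y}

theorem loopClass_eq_of_homotopic {γ₀ γ₁ : Path x x} (h : γ₀.Homotopic γ₁) :
    loopClass γ₀ = loopClass γ₁ :=
  Quotient.sound h

theorem loopClass_trans_eq_mul (α τ : Path x m) (β : Path m x) :
    loopClass (α.trans β) = loopClass (τ.trans β) * loopClass (α.trans τ.symm) := by
  change FundamentalGroup.fromPath (Path.Homotopic.Quotient.mk _) =
    FundamentalGroup.fromPath (Path.Homotopic.Quotient.mk ((α.trans τ.symm).trans (τ.trans β)))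
  simp only [Path.Homotopic.Quotient.mk_trans, Path.Homotopic.Quotient.mk_symm,
    Path.Homotopic.Quotient.trans_assoc]
  rw [← Path.Homotopic.Quotient.trans_assoc _ (Path.Homotopic.Quotient.mk τ),
    Path.Homotopic.Quotient.symm_trans, Path.Homotopic.Quotient.refl_trans]

end FundamentalGroup

section PathLength

variable {X : Type*} [MetricSpace X] {x y z : X}

theorem edist_le_pathLength (α : Path x y) : edist x y ≤ pathLength α := by
  simpa [pathLength] using
    eVariationOn.edist_le α.extend (left_mem_Icc.2 zero_le_one) (right_mem_Icc.2 zero_le_one)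

theorem pathLength_cast {x' y' : X} (α : Path x y) (hx : x' = x) (hy : y' = y) :
    pathLength (α.cast hx hy) = pathLength α :=
  rfl

theorem pathLength_symm (α : Path x y) : pathLength α.symm = pathLength α := by
  rw [pathLength, Path.extend_symm, ← Function.comp_def α.extend,
    eVariationOn.comp_eq_of_antitoneOn _ _ fun u _ v _ huv ↦ by linarith, image_const_sub_Icc]
  norm_num [pathLength]

theorem pathLength_trans (α : Path x y) (β : Path y z) :
    pathLength (α.trans β) = pathLength α + pathLength β := by
  have h₁ : eVariationOn (α.trans β).extend (Icc 0 (1 / 2)) = pathLength α := by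
    rw [eVariationOn.eq_of_eqOn (f' := α.extend ∘ fun t ↦ 2 * t + 0)
      (fun t ht ↦ by simp [Path.extend_trans_of_le_half α β ht.2]),
      eVariationOn_comp_affine_Icc _ zero_le_two _ (by norm_num)]
    norm_num [pathLength]
  have h₂ : eVariationOn (α.trans β).extend (Icc (1 / 2) 1) = pathLength β := by
    rw [eVariationOn.eq_of_eqOn (f' := β.extend ∘ fun t ↦ 2 * t + -1)
      (fun t ht ↦ by simp [Path.extend_trans_of_half_le α β ht.1, sub_eq_add_neg]),
      eVariationOn_comp_affine_Icc _ zero_le_two _ (by norm_num)]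
    norm_num [pathLength]
  have hsplit := eVariationOn.Icc_add_Icc (α.trans β).extend (s := univ)
    (by norm_num : (0 : ℝ) ≤ 1 / 2) (by norm_num : (1 / 2 : ℝ) ≤ 1) (mem_univ _)
  simp only [univ_inter] at hsplit
  rw [pathLength, ← hsplit, h₁, h₂]

theorem pathLength_subpath (α : Path x y) {t₀ t₁ : unitInterval} (h : t₀ ≤ t₁) :
    pathLength (α.subpath t₀ t₁) = eVariationOn α.extend (Icc t₀ t₁) := by
  rw [pathLength, eVariationOn.eq_of_eqOn (f' := α.extend ∘ fun t ↦ (t₁ - t₀ : ℝ) * t + t₀),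
    eVariationOn_comp_affine_Icc _ (sub_nonneg.2 h) _ zero_le_one]
  · simp
  · intro t ht
    rw [Path.extend_apply _ ht, Function.comp_apply, Path.subpath, Path.coe_mk_mk,
      Function.comp_apply, ← Path.extend_extends', Icc.coe_convexComb]
    ring_nf

theorem pathLength_subpath_of_arclength {γ : ℝ → X} {L : ℝ} (hL : 0 ≤ L)
    (harc : ∀ s t : ℝ, 0 ≤ s → s ≤ t → t ≤ L →
      eVariationOn γ (Icc s t) = ENNReal.ofReal (t - s))
    {Γ : Path x y} (hΓ : ∀ t : unitInterval, Γ t = γ (L * t))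
    {t₀ t₁ : unitInterval} (h : t₀ ≤ t₁) :
    pathLength (Γ.subpath t₀ t₁) = ENNReal.ofReal (L * (t₁ - t₀)) := by
  have h' : (t₀ : ℝ) ≤ t₁ := h
  have hEq : EqOn Γ.extend (γ ∘ fun t ↦ L * t + 0) (Icc t₀ t₁) := fun t ht ↦ by
    rw [Path.extend_apply _ ⟨t₀.2.1.trans ht.1, ht.2.trans t₁.2.2⟩, hΓ]
    simp
  rw [pathLength_subpath Γ h, eVariationOn.eq_of_eqOn hEq, eVariationOn_comp_affine_Icc _ hL _ h,
    harc _ _ (by simpa using mul_nonneg hL t₀.2.1) (by simpa using mul_le_mul_of_nonneg_left h' hL)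
      (by simpa using mul_le_of_le_one_right hL t₁.2.2)]
  ring_nf

end PathLength

section Systole

variable {X : Type*} [MetricSpace X] {x m : X} {G : Type*} [Group G]
  {φ : FundamentalGroup X x →* G}

theorem relSystole_le_pathLength {γ : Path x x} (hfin : pathLength γ ≠ ⊤)
    (hφ : φ (loopClass γ) ≠ 1) : relSystole x φ ≤ pathLength γ := by
  unfold relSystole
  exact iInf₂_le γ ⟨hfin, hφ⟩

theorem map_loopClass_eq_one_of_pathLength_lt_relSystole {γ : Path x x}
    (h : pathLength γ < relSystole x φ) : φ (loopClass γ) = 1 := by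
  by_contra hφ
  exact h.not_ge (relSystole_le_pathLength (ne_top_of_lt h) hφ)

theorem map_loopClass_trans_eq_one_of_shortcut (α τ : Path x m) (β : Path m x)
    (hα : pathLength α + pathLength τ < relSystole x φ)
    (hβ : pathLength τ + pathLength β < relSystole x φ) :
    φ (loopClass (α.trans β)) = 1 := by
  rw [loopClass_trans_eq_mul α τ β, map_mul,
    map_loopClass_eq_one_of_pathLength_lt_relSystole (by rwa [pathLength_trans]),
    map_loopClass_eq_one_of_pathLength_lt_relSystole
      (by rwa [pathLength_trans, pathLength_symm]), one_mul]

end Systole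

theorem systolic_loop_is_minimizing_general {X : Type*} [MetricSpace X]
    (hconn : ∀ y z : X, ∀ ε : ℝ, 0 < ε →
      ∃ σ : Path y z, pathLength σ < ENNReal.ofReal (dist y z + ε))
    (p : X) {G : Type*} [Group G] (φ : FundamentalGroup X p →* G)
    (L : ℝ) (hL : 0 < L) (γ : ℝ → X)
    (harc : ∀ s t : ℝ, 0 ≤ s → s ≤ t → t ≤ L →
      eVariationOn γ (Set.Icc s t) = ENNReal.ofReal (t - s))
    (Γ : Path p p) (hΓ : ∀ t : unitInterval, Γ t = γ (L * t))
    (hnontriv : φ (loopClass Γ) ≠ 1)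
    (hmin : ∀ σ : Path p p, pathLength σ ≠ ⊤ → φ (loopClass σ) ≠ 1 →
      ENNReal.ofReal L ≤ pathLength σ) :
    ∀ r ∈ Set.Icc 0 (L / 2), dist p (γ r) = r := by
  rintro r ⟨hr₀, hr⟩
  set s : unitInterval := ⟨r / L, div_nonneg hr₀ hL.le, (div_le_one hL).2 (by linarith)⟩
  have hΓs : Γ s = γ r := by rw [hΓ, mul_div_cancel₀ r hL.ne']
  have hα : pathLength (Γ.initialSubpath s) = ENNReal.ofReal r := by
    rw [Path.initialSubpath, pathLength_cast, pathLength_subpath_of_arclength hL.le harc hΓ s.2.1]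
    simp [s, mul_div_cancel₀ r hL.ne']
  have hβ : pathLength (Γ.finalSubpath s) = ENNReal.ofReal (L - r) := by
    rw [Path.finalSubpath, pathLength_cast, pathLength_subpath_of_arclength hL.le harc hΓ s.2.2]
    simp [s, mul_sub, mul_div_cancel₀ r hL.ne']
  have hsys : ENNReal.ofReal L ≤ relSystole p φ := le_iInf₂ fun σ hσ ↦ hmin σ hσ.1 hσ.2
  rw [← hΓs]
  refine le_antisymm ?_ (not_lt.1 fun hlt ↦ hnontriv ?_)
  · have := edist_le_pathLength (Γ.initialSubpath s)
    rwa [hα, edist_dist, ENNReal.ofReal_le_ofReal_iff hr₀] at this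
  obtain ⟨τ, hτ⟩ := hconn p (Γ s) (r - dist p (Γ s)) (sub_pos.2 hlt)
  rw [add_sub_cancel] at hτ
  rw [← loopClass_eq_of_homotopic (Path.Homotopic.initialSubpath_trans_finalSubpath Γ s)]
  have hshort : ∀ c, 0 ≤ c → c + r ≤ L → ENNReal.ofReal c + pathLength τ < relSystole p φ :=
    fun c hc hcL ↦ calc
      ENNReal.ofReal c + pathLength τ < ENNReal.ofReal c + ENNReal.ofReal r :=
        ENNReal.add_lt_add_left ENNReal.ofReal_ne_top hτ
      _ = ENNReal.ofReal (c + r) := (ENNReal.ofReal_add hc hr₀).symm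
      _ ≤ relSystole p φ := (ENNReal.ofReal_le_ofReal hcL).trans hsys
  refine map_loopClass_trans_eq_one_of_shortcut _ τ _ ?_ ?_
  · rw [hα]
    exact hshort r hr₀ (by linarith)
  · rw [hβ, add_comm]
    exact hshort (L - r) (by linarith) (by linarith)

/-- Let `γ : [0, L] → X` be a shortest loop based at `p` whose path-homotopy class has
nontrivial image under `φ : π₁(X, p) → G`, parametrized by arclength.  Then
`dist p (γ r) = r` for every `r ∈ [0, L/2]`: the loop is minimizing on subarcs of length
up to half its total length.  (`X` is assumed to be such that any two points can be
joined by paths of length arbitrarily close to their distance; the loop `γ` is encoded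
together with its reparametrization `Γ : Path p p`, `Γ t = γ (L t)`.) -/
theorem systolic_loop_is_minimizing {X : Type*} [MetricSpace X]
    (hconn : ∀ y z : X, ∀ ε : ℝ, 0 < ε →
      ∃ σ : Path y z, pathLength σ < ENNReal.ofReal (dist y z + ε))
    (p : X) {G : Type*} [Group G] (φ : FundamentalGroup X p →* G)
    (L : ℝ) (hL : 0 < L) (γ : ℝ → X)
    (hcont : ContinuousOn γ (Set.Icc 0 L)) (h0 : γ 0 = p) (hend : γ L = p)
    (harc : ∀ s t : ℝ, 0 ≤ s → s ≤ t → t ≤ L →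
      eVariationOn γ (Set.Icc s t) = ENNReal.ofReal (t - s))
    (Γ : Path p p) (hΓ : ∀ t : unitInterval, Γ t = γ (L * t))
    (hnontriv : φ (loopClass Γ) ≠ 1)
    (hmin : ∀ σ : Path p p, pathLength σ ≠ ⊤ → φ (loopClass σ) ≠ 1 →
      ENNReal.ofReal L ≤ pathLength σ) :
    ∀ r ∈ Set.Icc 0 (L / 2), dist p (γ r) = r :=
  systolic_loop_is_minimizing_general hconn p φ L hL γ harc Γ hΓ hnontriv hmin
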